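/- For any graphs G and H, μ_int(G ⊙ H) ≤ max{μ_int(G), |V(H)|}. -/

import Mathlib

/-- An (improper) interval edge coloring: for every vertex, the set of colors on
incident edges forms an interval of consecutive integers. -/
def IsIntervalColoring {V : Type*} (G : SimpleGraph V) (c : Sym2 V → ℤ) : Prop :=
  ∀ v : V, ∀ a b x : ℤ,
    (∃ u, G.Adj v u ∧ c s(v, u) = a) → (∃ u, G.Adj v u ∧ c s(v, u) = b) →
    a ≤ x → x ≤ b → ∃ u, G.Adj v u ∧ c s(v, u) = x

/-- A coloring is `k`-improper if at every vertex each color appears on at most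
`k` incident edges. -/
def IsKImproper {V : Type*} (G : SimpleGraph V) (c : Sym2 V → ℤ) (k : ℕ) : Prop :=
  ∀ v : V, ∀ q : ℤ, ({u : V | G.Adj v u ∧ c s(v, u) = q}).ncard ≤ k

/-- The interval coloring impropriety `μ_int(G)`: the least `k` such that `G`
admits a `k`-improper interval edge coloring. -/
noncomputable def impropriety {V : Type*} (G : SimpleGraph V) : ℕ :=
  sInf {k : ℕ | ∃ c : Sym2 V → ℤ, IsIntervalColoring G c ∧ IsKImproper G c k}

/-- The maximum degree of a graph. -/
noncomputable def maxDeg {V : Type*} (G : SimpleGraph V) : ℕ :=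
  sSup {d : ℕ | ∃ v : V, (G.neighborSet v).ncard = d}

/-- The corona product `G ⊙ H`: take `G` and one copy of `H` for every vertex
of `G`, joining each vertex `v` of `G` to all vertices of its copy of `H`. -/
def corona {V W : Type*} (G : SimpleGraph V) (H : SimpleGraph W) :
    SimpleGraph (V ⊕ V × W) where
  Adj x y :=
    match x, y with
    | Sum.inl u, Sum.inl v => G.Adj u v
    | Sum.inl u, Sum.inr p => u = p.1
    | Sum.inr p, Sum.inl u => u = p.1
    | Sum.inr p, Sum.inr q => p.1 = q.1 ∧ H.Adj p.2 q.2
  symm := by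
    refine ⟨?_⟩
    rintro (u | p) (v | q) h
    · exact h.symm
    · exact h
    · exact h
    · exact ⟨h.1.symm, h.2.symm⟩
  loopless := by
    refine ⟨?_⟩
    rintro (u | p) h
    · exact G.irrefl h
    · exact H.irrefl h.2


/-!
Take an optimal interval coloring `c` of `G` and let `M v` be the largest color at `v`. Color
every edge of `G ⊙ H` leaving `G` (those from `v` into its copy `H_v`, and those inside `H_v`)
with `M v + 1`. At `v` this extends the interval of `c` by one color used `|V(H)|` times; at a
vertex of `H_v` only one color is used, on at most `|V(H)|` edges.
-/

open Set

section Impropriety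

variable {V : Type*}

lemma isIntervalColoring_const (G : SimpleGraph V) (a : ℤ) :
    IsIntervalColoring G (fun _ => a) := by
  rintro v _ _ x ⟨u, hu, rfl⟩ ⟨_, _, rfl⟩ hax hxb
  exact ⟨u, hu, le_antisymm hax hxb⟩

lemma isKImproper_natCard [Finite V] (G : SimpleGraph V) (c : Sym2 V → ℤ) :
    IsKImproper G c (Nat.card V) :=
  fun _ _ => ncard_le_card _

lemma impropriety_le {G : SimpleGraph V} {c : Sym2 V → ℤ} {k : ℕ}
    (hc : IsIntervalColoring G c) (hk : IsKImproper G c k) : impropriety G ≤ k :=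
  Nat.sInf_le ⟨c, hc, hk⟩

lemma exists_isIntervalColoring_isKImproper_impropriety [Finite V] (G : SimpleGraph V) :
    ∃ c, IsIntervalColoring G c ∧ IsKImproper G c (impropriety G) :=
  Nat.sInf_mem (s := {k | ∃ c, IsIntervalColoring G c ∧ IsKImproper G c k})
    ⟨_, _, isIntervalColoring_const G 0, isKImproper_natCard G _⟩

end Impropriety

section MaxColor

variable {V : Type*}

/-- At an isolated vertex this is the harmless junk value `sSup ∅ = 0`. -/
noncomputable def maxColor (G : SimpleGraph V) (c : Sym2 V → ℤ) (v : V) : ℤ :=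
  sSup ((fun u => c s(v, u)) '' G.neighborSet v)

variable [Finite V] {G : SimpleGraph V} (c : Sym2 V → ℤ) {v u : V}

lemma le_maxColor (h : G.Adj v u) : c s(v, u) ≤ maxColor G c v :=
  le_csSup ((toFinite _).image _).bddAbove (mem_image_of_mem _ h)

lemma exists_adj_color_eq_maxColor (h : G.Adj v u) :
    ∃ u', G.Adj v u' ∧ c s(v, u') = maxColor G c v :=
  (image_nonempty.2 ⟨u, h⟩).csSup_mem ((toFinite _).image _)

end MaxColor

section Corona

variable {V W : Type*} {G : SimpleGraph V} {H : SimpleGraph W}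

@[simp] lemma corona_adj_inl_inl {u v : V} : (corona G H).Adj (.inl u) (.inl v) ↔ G.Adj u v :=
  Iff.rfl

@[simp] lemma corona_adj_inl_inr {v : V} {p : V × W} :
    (corona G H).Adj (.inl v) (.inr p) ↔ v = p.1 :=
  Iff.rfl

@[simp] lemma corona_adj_inr_inl {v : V} {p : V × W} :
    (corona G H).Adj (.inr p) (.inl v) ↔ v = p.1 :=
  Iff.rfl

@[simp] lemma corona_adj_inr_inr {p q : V × W} :
    (corona G H).Adj (.inr p) (.inr q) ↔ p.1 = q.1 ∧ H.Adj p.2 q.2 :=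
  Iff.rfl

/-- The neighbours of `(v, w)` are `v` and some `(v, w')` with `w' ≠ w`, so sending `v` to `w`
and `(v, w')` to `w'` embeds the neighbourhood into `W`. -/
lemma injOn_neighborSet_corona_inr (p : V × W) :
    InjOn (Sum.elim (fun _ => p.2) Prod.snd) ((corona G H).neighborSet (.inr p)) := by
  rintro (u | r) hx (u' | r') hy hxy <;>
    simp only [SimpleGraph.mem_neighborSet, corona_adj_inr_inl, corona_adj_inr_inr] at hx hy <;>
    simp only [Sum.elim_inl, Sum.elim_inr] at hxy
  · rw [hx, hy]
  · exact absurd (hxy ▸ hy.2) H.irrefl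
  · exact absurd (hxy ▸ hx.2) H.irrefl
  · exact congrArg Sum.inr (Prod.ext (hx.1.symm.trans hy.1) hxy)

end Corona

section CoronaColoring

variable {V W : Type*} (c : Sym2 V → ℤ) (M : V → ℤ)

/-- An edge of a copy `H_v` has both ends over `v`, where the `max` is just `M v`; the `max`
only makes the function symmetric. -/
def coronaEdgeColor : V ⊕ V × W → V ⊕ V × W → ℤ
  | .inl u, .inl v => c s(u, v)
  | .inl _, .inr p => M p.1 + 1
  | .inr p, .inl _ => M p.1 + 1
  | .inr p, .inr q => max (M p.1) (M q.1) + 1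

lemma coronaEdgeColor_comm (x y : V ⊕ V × W) :
    coronaEdgeColor c M x y = coronaEdgeColor c M y x := by
  rcases x with u | p <;> rcases y with v | q <;> simp [coronaEdgeColor, Sym2.eq_swap, max_comm]

def coronaColoring : Sym2 (V ⊕ V × W) → ℤ :=
  Sym2.lift ⟨coronaEdgeColor c M, coronaEdgeColor_comm c M⟩

@[simp] lemma coronaColoring_inl_inl (u v : V) :
    coronaColoring (W := W) c M s(.inl u, .inl v) = c s(u, v) :=
  rfl

@[simp] lemma coronaColoring_inl_inr (v : V) (p : V × W) :
    coronaColoring c M s(.inl v, .inr p) = M p.1 + 1 :=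
  rfl

variable {G : SimpleGraph V} {H : SimpleGraph W}

lemma coronaColoring_of_adj_inr {p : V × W} {y : V ⊕ V × W} (h : (corona G H).Adj (.inr p) y) :
    coronaColoring c M s(.inr p, y) = M p.1 + 1 := by
  rcases y with u | q
  · rfl
  · simp [coronaColoring, coronaEdgeColor, (corona_adj_inr_inr.1 h).1]

variable {c M}

lemma corona_adj_inl_and_coronaColoring_eq_iff {v : V} {q : ℤ} (hq : q ≤ M v)
    (y : V ⊕ V × W) :
    ((corona G H).Adj (.inl v) y ∧ coronaColoring c M s(.inl v, y) = q) ↔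
      ∃ u, (G.Adj v u ∧ c s(v, u) = q) ∧ .inl u = y := by
  rcases y with u | p
  · simp
  · simp only [corona_adj_inl_inr, coronaColoring_inl_inr, reduceCtorEq, and_false, exists_false,
      iff_false, not_and]
    rintro rfl
    omega

lemma isIntervalColoring_coronaColoring (hc : IsIntervalColoring G c)
    (hM : ∀ v u, G.Adj v u → c s(v, u) ≤ M v)
    (hMattained : ∀ v u, G.Adj v u → ∃ u', G.Adj v u' ∧ c s(v, u') = M v) :
    IsIntervalColoring (corona G H) (coronaColoring c M) := by
  rintro (v | p) a b x ⟨ya, hya, rfl⟩ ⟨yb, hyb, rfl⟩ hax hxb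
  · by_cases hx : x ≤ M v
    · obtain ⟨ua, ⟨hua, hca⟩, rfl⟩ :=
        (corona_adj_inl_and_coronaColoring_eq_iff (hax.trans hx) ya).1 ⟨hya, rfl⟩
      obtain ⟨u, hu, rfl⟩ := hc v _ _ x ⟨ua, hua, hca⟩ (hMattained v ua hua) hax hx
      exact ⟨.inl u, hu, rfl⟩
    · refine ⟨yb, hyb, ?_⟩
      rcases yb with u | q
      · have := hM v u hyb
        simp only [coronaColoring_inl_inl] at hxb ⊢
        omega
      · simp only [corona_adj_inl_inr] at hyb
        simp only [coronaColoring_inl_inr, ← hyb] at hxb ⊢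
        omega
  · rw [coronaColoring_of_adj_inr c M hya] at hax
    rw [coronaColoring_of_adj_inr c M hyb] at hxb
    exact ⟨ya, hya, by rw [coronaColoring_of_adj_inr c M hya]; omega⟩

lemma isKImproper_coronaColoring [Fintype W] (hM : ∀ v u, G.Adj v u → c s(v, u) ≤ M v) {k : ℕ}
    (hk : IsKImproper G c k) :
    IsKImproper (corona G H) (coronaColoring c M) (max k (Fintype.card W)) := by
  rintro (v | p) q
  · by_cases hq : q ≤ M v
    · have : {y | (corona G H).Adj (.inl v) y ∧ coronaColoring c M s(.inl v, y) = q} =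
          Sum.inl '' {u | G.Adj v u ∧ c s(v, u) = q} :=
        ext (corona_adj_inl_and_coronaColoring_eq_iff hq)
      rw [this, ncard_image_of_injective _ Sum.inl_injective]
      exact (hk v q).trans (le_max_left _ _)
    · have hsub : {y | (corona G H).Adj (.inl v) y ∧ coronaColoring c M s(.inl v, y) = q} ⊆
          (fun w => .inr (v, w)) '' univ := by
        rintro (u | r) ⟨hy, hcy⟩
        · have := hM v u hy
          simp only [coronaColoring_inl_inl] at hcy
          omega
        · simp only [corona_adj_inl_inr] at hy
          exact ⟨r.2, mem_univ _, by rw [hy]⟩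
      calc _ ≤ _ := ncard_le_ncard hsub (finite_univ.image _)
        _ ≤ (univ : Set W).ncard := ncard_image_le finite_univ
        _ = Fintype.card W := by rw [ncard_univ, Nat.card_eq_fintype_card]
        _ ≤ _ := le_max_right _ _
  · calc _ ≤ (univ : Set W).ncard :=
          ncard_le_ncard_of_injOn _ (fun _ _ => mem_univ _)
            ((injOn_neighborSet_corona_inr p).mono fun _ hy => hy.1) finite_univ
      _ = Fintype.card W := by rw [ncard_univ, Nat.card_eq_fintype_card]
      _ ≤ _ := le_max_right _ _

end CoronaColoring

/-- For any graphs `G` and `H`, `μ_int(G ⊙ H) ≤ max {μ_int(G), |V(H)|}`. -/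
theorem stmt17 {V W : Type*} [Fintype V] [Fintype W]
    (G : SimpleGraph V) (H : SimpleGraph W) :
    impropriety (corona G H) ≤ max (impropriety G) (Fintype.card W) := by
  obtain ⟨c, hc, hk⟩ := exists_isIntervalColoring_isKImproper_impropriety G
  have hM : ∀ v u, G.Adj v u → c s(v, u) ≤ maxColor G c v := fun _ _ => le_maxColor c
  exact impropriety_le
    (isIntervalColoring_coronaColoring hc hM fun _ _ => exists_adj_color_eq_maxColor c)
    (isKImproper_coronaColoring hM hk)
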